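/- arXiv:1810.08876 — 2 statements merged into one kernel-verified Lean document; each statement's English description precedes it below -/
import Mathlib

section
/- Let a ≥ 0, k > 1, p > 1, ε ∈ (0,1), r > 0, χ > 0, η̃ > 0 and let S : (0,∞) → ℝ satisfy 0 ≤ S(s) ≤ (a+s)^{-k} for all s > 0. Define H(s) := -χ p r S(s)/(a+s)^k - r²/(a+s)^{2k} - k r/(a+s)^{k+1} + (2pr/(a+s)^k + χ p(p-1) S(s))² / (4(1-ε)p(p-1)). If A := ((1+εp-ε)/(k(1-ε)(p-1)))·r + εpχ/(k(1-ε)) + p(p-1)χ²/(4k(1-ε)r) ≤ (a+η̃)^{k-1}, then H(s) ≤ 0 for all s ≥ η̃. -/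
theorem H_nonpos (a k p ε r χ η : ℝ) (ha : 0 ≤ a) (hk : 1 < k) (hp : 1 < p)
    (hε : 0 < ε) (hε' : ε < 1) (hr : 0 < r) (hχ : 0 < χ) (hη : 0 < η)
    (S : ℝ → ℝ) (hS : ∀ s, 0 < s → 0 ≤ S s ∧ S s ≤ (a + s) ^ (-k))
    (H : ℝ → ℝ)
    (hH : ∀ s, 0 < s → H s =
      -(χ * p * r * S s / (a + s) ^ k) - r ^ 2 / (a + s) ^ (2 * k)
        - k * r / (a + s) ^ (k + 1)
        + (2 * p * r / (a + s) ^ k + χ * p * (p - 1) * S s) ^ 2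
            / (4 * (1 - ε) * p * (p - 1)))
    (hA : (1 + ε * p - ε) / (k * (1 - ε) * (p - 1)) * r
        + ε * p * χ / (k * (1 - ε))
        + p * (p - 1) * χ ^ 2 / (4 * k * (1 - ε) * r) ≤ (a + η) ^ (k - 1)) :
    ∀ s, η ≤ s → H s ≤ 0 := by
  intro s hs
  have hs0 : 0 < s := lt_of_lt_of_le hη hs
  have hx : 0 < a + s := by linarith
  obtain ⟨hS0, hS1⟩ := hS s hs0
  have hε1 : (0:ℝ) < 1 - ε := by linarith
  have hp1 : (0:ℝ) < p - 1 := by linarith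
  have hp0 : (0:ℝ) < p := by linarith
  have hk0 : (0:ℝ) < k := by linarith
  have hX : 0 < (a + s) ^ k := Real.rpow_pos_of_pos hx k
  have h2k : (a + s) ^ (2*k) = ((a + s) ^ k)^2 := by
    rw [two_mul, Real.rpow_add hx, sq]
  have hk1 : (a + s) ^ (k+1) = (a + s) ^ k * (a + s) := by
    rw [Real.rpow_add hx, Real.rpow_one]
  have hkm : (a + s) ^ (k-1) = (a + s) ^ k / (a + s) := by
    rw [Real.rpow_sub hx, Real.rpow_one]
  have hneg : (a + s) ^ (-k) = ((a + s) ^ k)⁻¹ := Real.rpow_neg hx.le k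
  set A : ℝ := (1 + ε * p - ε) / (k * (1 - ε) * (p - 1)) * r
        + ε * p * χ / (k * (1 - ε))
        + p * (p - 1) * χ ^ 2 / (4 * k * (1 - ε) * r) with hAdef
  have hxη : (a + η) ^ (k-1) ≤ (a + s) ^ (k-1) :=
    Real.rpow_le_rpow (by linarith) (by linarith) (by linarith)
  have hAx : A * (a + s) ≤ (a + s) ^ k := by
    have h1 : A ≤ (a + s) ^ k / (a + s) := by
      rw [← hkm]; exact le_trans hA hxη
    calc A * (a + s) ≤ ((a + s) ^ k / (a + s)) * (a + s) :=
          mul_le_mul_of_nonneg_right h1 hx.le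
      _ = (a + s) ^ k := by field_simp
  set X : ℝ := (a + s) ^ k with hXdef
  set T : ℝ := S s * X with hTdef
  have hT1 : T ≤ 1 := by
    have := mul_le_mul_of_nonneg_right hS1 hX.le
    rwa [hneg, inv_mul_cancel₀ hX.ne'] at this
  have hT0 : 0 ≤ T := mul_nonneg hS0 hX.le
  -- key polynomial inequality
  have t1 : 0 ≤ (4*(1-ε)*p*(p-1)*k*r) * (X - A*(a+s)) := by
    apply mul_nonneg (by positivity) (by linarith)
  have t2 : 0 ≤ ((a+s) * (4*ε*p^2*r*χ*(p-1))) * (1 - T) := by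
    apply mul_nonneg (by positivity) (by linarith)
  have t3 : 0 ≤ ((a+s) * (p^2*(p-1)^2*χ^2)) * ((1 - T)*(1 + T)) := by
    apply mul_nonneg (by positivity) (mul_nonneg (by linarith) (by linarith))
  have key : (a+s)*(2*p*r + χ*p*(p-1)*T)^2
      ≤ 4*(1-ε)*p*(p-1)*(χ*p*r*T*(a+s) + r^2*(a+s) + k*r*X) := by
    have hAexp : (4*(1-ε)*p*(p-1)*k*r) * A
        = 4*p*(1+ε*p-ε)*r^2 + 4*ε*p^2*(p-1)*χ*r + p^2*(p-1)^2*χ^2 := by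
      rw [hAdef]; field_simp
    have hz : ((4*(1-ε)*p*(p-1)*k*r) * A
        - (4*p*(1+ε*p-ε)*r^2 + 4*ε*p^2*(p-1)*χ*r + p^2*(p-1)^2*χ^2)) * (a+s)
        = 0 := by rw [hAexp]; ring
    have hid : 4*(1-ε)*p*(p-1)*(χ*p*r*T*(a+s) + r^2*(a+s) + k*r*X)
        - (a+s)*(2*p*r + χ*p*(p-1)*T)^2
      = (4*(1-ε)*p*(p-1)*k*r) * (X - A*(a+s))
        + ((a+s) * (4*ε*p^2*r*χ*(p-1))) * (1 - T)
        + ((a+s) * (p^2*(p-1)^2*χ^2)) * ((1 - T)*(1 + T))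
        + ((4*(1-ε)*p*(p-1)*k*r) * A
            - (4*p*(1+ε*p-ε)*r^2 + 4*ε*p^2*(p-1)*χ*r + p^2*(p-1)^2*χ^2)) * (a+s) := by
      ring
    linarith [t1, t2, t3, hid, hz]
  rw [hH s hs0, h2k, hk1]
  have heq : -(χ * p * r * S s / X) - r ^ 2 / X ^ 2
        - k * r / (X * (a + s))
        + (2 * p * r / X + χ * p * (p - 1) * S s) ^ 2
            / (4 * (1 - ε) * p * (p - 1))
      = ((a+s)*(2*p*r + χ*p*(p-1)*T)^2
          - 4*(1-ε)*p*(p-1)*(χ*p*r*T*(a+s) + r^2*(a+s) + k*r*X))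
        / (4*(1-ε)*p*(p-1)*X^2*(a+s)) := by
    rw [hTdef]
    field_simp
    ring
  rw [heq]
  exact div_nonpos_of_nonpos_of_nonneg (by linarith) (by positivity)
end

section
/- Let β ∈ (0,1), γ ∈ (0,1), λ > 0, c ∈ (0,1), and t₀ ∈ ℝ. There exists L > 0 (depending only on β, γ, λ, c) such that for all t > t₀, ∫_{t₀}^{t} (t-s)^{-γ} e^{-λ(t-s)} (1 + (s-t₀)^{-β})^{c} ds ≤ L·(1 + (t-t₀)^{-β}). -/
/-!
After the shift `u = s - t₀` the integral is `∫₀^δ k(δ - u) w(u) du` with `δ = t - t₀`, the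
kernel `k(v) = v^(-γ) e^(-λv)` and the weight `w(u) = 1 + u^(-β)`, which dominates
`(1 + u^(-β))^c` because `c ≤ 1`. Both `k` and `w` are decreasing, and for every `u ∈ (0, δ)`
one of `u`, `δ - u` is at least `δ/2`, so `k(δ - u) w(u) ≤ w(δ/2) k(δ - u) + k(δ/2) w(u)`.
Integrating, the first term is at most `w(δ/2) ∫₀^∞ k ≲ 1 + δ^(-β)`; the second equals
`k(δ/2) (δ + δ^(1-β)/(1-β))`, which is `≲ 1 + δ^(-β)` because `v k(v) = v^(1-γ) e^(-λv)` is bounded.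
-/

open MeasureTheory Set intervalIntegral

theorem integral_mono_of_nonneg_on_Ioo {f g : ℝ → ℝ} {a b : ℝ} (hab : a ≤ b)
    (hg : IntervalIntegrable g volume a b) (hf : ∀ x ∈ Ioo a b, 0 ≤ f x)
    (hfg : ∀ x ∈ Ioo a b, f x ≤ g x) :
    ∫ x in a..b, f x ≤ ∫ x in a..b, g x := by
  simp only [integral_of_le hab, integral_Ioc_eq_integral_Ioo]
  exact integral_mono_of_nonneg (ae_restrict_of_forall_mem measurableSet_Ioo hf)
    (hg.1.mono_set Ioo_subset_Ioc_self) (ae_restrict_of_forall_mem measurableSet_Ioo hfg)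

theorem integral_comp_sub_mul_comp_sub (k w : ℝ → ℝ) (a b : ℝ) :
    ∫ s in a..b, k (b - s) * w (s - a) = ∫ u in (0 : ℝ)..(b - a), k (b - a - u) * w u := by
  have h := integral_comp_sub_right (fun u => k (b - a - u) * w u) a (a := a) (b := b)
  simp only [sub_self, sub_sub_sub_cancel_right] at h
  exact h

theorem mul_le_add_of_antitoneOn {k w : ℝ → ℝ} (hk : AntitoneOn k (Ioi 0))
    (hw : AntitoneOn w (Ioi 0)) (hk₀ : ∀ v ∈ Ioi 0, 0 ≤ k v) (hw₀ : ∀ u ∈ Ioi 0, 0 ≤ w u)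
    {δ u : ℝ} (hu : u ∈ Ioo 0 δ) :
    k (δ - u) * w u ≤ w (δ / 2) * k (δ - u) + k (δ / 2) * w u := by
  obtain ⟨hu₀, huδ⟩ := hu
  have hδu : δ - u ∈ Ioi 0 := sub_pos.2 huδ
  have hhalf : δ / 2 ∈ Ioi 0 := half_pos (hu₀.trans huδ)
  rcases le_total (δ / 2) u with h | h
  · have := mul_le_mul_of_nonneg_left (hw hhalf hu₀ h) (hk₀ _ hδu)
    nlinarith [mul_nonneg (hk₀ _ hhalf) (hw₀ _ hu₀)]
  · have := mul_le_mul_of_nonneg_right (hk hhalf hδu (by linarith)) (hw₀ _ hu₀)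
    nlinarith [mul_nonneg (hw₀ _ hhalf) (hk₀ _ hδu)]

theorem integral_le_of_le_comp_sub_mul {f k w : ℝ → ℝ} {δ : ℝ} (hδ : 0 ≤ δ)
    (hk : AntitoneOn k (Ioi 0)) (hw : AntitoneOn w (Ioi 0))
    (hk₀ : ∀ v ∈ Ioi 0, 0 ≤ k v) (hw₀ : ∀ u ∈ Ioi 0, 0 ≤ w u)
    (hkI : IntervalIntegrable k volume 0 δ) (hwI : IntervalIntegrable w volume 0 δ)
    (hf₀ : ∀ u ∈ Ioo 0 δ, 0 ≤ f u) (hf : ∀ u ∈ Ioo 0 δ, f u ≤ k (δ - u) * w u) :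
    ∫ u in (0 : ℝ)..δ, f u
      ≤ w (δ / 2) * (∫ v in (0 : ℝ)..δ, k v) + k (δ / 2) * ∫ u in (0 : ℝ)..δ, w u := by
  have hkI' : IntervalIntegrable (fun u => k (δ - u)) volume 0 δ := by
    simpa using (hkI.comp_sub_left δ).symm
  calc ∫ u in (0 : ℝ)..δ, f u
      ≤ ∫ u in (0 : ℝ)..δ, (w (δ / 2) * k (δ - u) + k (δ / 2) * w u) :=
        integral_mono_of_nonneg_on_Ioo hδ ((hkI'.const_mul _).add (hwI.const_mul _)) hf₀
          fun u hu => (hf u hu).trans (mul_le_add_of_antitoneOn hk hw hk₀ hw₀ hu)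
    _ = w (δ / 2) * (∫ v in (0 : ℝ)..δ, k v) + k (δ / 2) * ∫ u in (0 : ℝ)..δ, w u := by
        rw [integral_add (hkI'.const_mul _) (hwI.const_mul _), intervalIntegral.integral_const_mul,
          intervalIntegral.integral_const_mul, integral_comp_sub_left k δ, sub_self, sub_zero]

theorem half_rpow_neg_le {x r : ℝ} (hx : 0 ≤ x) (hr : r ≤ 1) :
    (x / 2) ^ (-r) ≤ 2 * x ^ (-r) := by
  rw [Real.div_rpow hx zero_le_two, div_eq_mul_inv, ← Real.rpow_neg zero_le_two, neg_neg,
    mul_comm]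
  gcongr
  calc (2 : ℝ) ^ r ≤ 2 ^ (1 : ℝ) := Real.rpow_le_rpow_of_exponent_le one_le_two hr
    _ = 2 := Real.rpow_one 2

theorem rpow_le_one_add {x p : ℝ} (hx : 0 ≤ x) (hp₀ : 0 ≤ p) (hp₁ : p ≤ 1) : x ^ p ≤ 1 + x := by
  rcases le_total x 1 with h | h
  · linarith [Real.rpow_le_one hx h hp₀]
  · linarith [Real.rpow_one x ▸ Real.rpow_le_rpow_of_exponent_le h hp₁]

theorem integral_one_add_rpow_neg {β δ : ℝ} (hβ : β < 1) (hδ : 0 < δ) :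
    ∫ u in (0 : ℝ)..δ, (1 + u ^ (-β)) = δ + δ * δ ^ (-β) / (1 - β) := by
  rw [integral_add intervalIntegrable_const (intervalIntegrable_rpow' (by linarith)),
    integral_rpow (Or.inl (by linarith)), Real.zero_rpow (by linarith), Real.rpow_add_one hδ.ne']
  simp only [intervalIntegral.integral_const, sub_zero, smul_eq_mul, mul_one]
  ring_nf

noncomputable def expKernel (γ lam v : ℝ) : ℝ := v ^ (-γ) * Real.exp (-lam * v)

section expKernel

variable {γ lam : ℝ}

theorem expKernel_nonneg {v : ℝ} (hv : 0 ≤ v) : 0 ≤ expKernel γ lam v :=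
  mul_nonneg (Real.rpow_nonneg hv _) (Real.exp_pos _).le

theorem antitoneOn_expKernel (hγ : 0 ≤ γ) (hlam : 0 ≤ lam) :
    AntitoneOn (expKernel γ lam) (Ioi 0) := by
  intro a ha b _ hab
  exact mul_le_mul (Real.rpow_le_rpow_of_nonpos ha hab (neg_nonpos.2 hγ))
    (Real.exp_le_exp.2 (by nlinarith)) (Real.exp_pos _).le (Real.rpow_nonneg (le_of_lt ha) _)

theorem integrableOn_expKernel (hγ : γ < 1) (hlam : 0 < lam) :
    IntegrableOn (expKernel γ lam) (Ioi 0) := by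
  have h := integrableOn_rpow_mul_exp_neg_mul_rpow (p := 1) (s := -γ) (by linarith) one_pos hlam
  simp only [Real.rpow_one] at h
  exact h

theorem intervalIntegrable_expKernel {δ : ℝ} (hγ : γ < 1) (hlam : 0 < lam) (hδ : 0 ≤ δ) :
    IntervalIntegrable (expKernel γ lam) volume 0 δ :=
  (intervalIntegrable_iff_integrableOn_Ioc_of_le hδ).2
    ((integrableOn_expKernel hγ hlam).mono_set Ioc_subset_Ioi_self)

theorem integral_expKernel_le (hγ : γ < 1) (hlam : 0 < lam) {δ : ℝ} (hδ : 0 ≤ δ) :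
    ∫ v in (0 : ℝ)..δ, expKernel γ lam v ≤ ∫ v in Ioi 0, expKernel γ lam v := by
  rw [integral_of_le hδ]
  exact setIntegral_mono_set (integrableOn_expKernel hγ hlam)
    (ae_restrict_of_forall_mem measurableSet_Ioi fun v hv => expKernel_nonneg (le_of_lt hv))
    (Ioc_subset_Ioi_self.eventuallyLE)

theorem mul_expKernel_le (hγ₀ : 0 ≤ γ) (hγ₁ : γ ≤ 1) (hlam : 0 < lam) {v : ℝ} (hv : 0 < v) :
    v * expKernel γ lam v ≤ 1 + 1 / lam := by
  have hpow : v * v ^ (-γ) ≤ 1 + v := by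
    calc v * v ^ (-γ) = v ^ (1 - γ) := by
          rw [sub_eq_add_neg, Real.rpow_add hv, Real.rpow_one]
      _ ≤ 1 + v := rpow_le_one_add hv.le (by linarith) (by linarith)
  have hexp : v * Real.exp (-lam * v) ≤ 1 / lam := by
    rw [le_div_iff₀ hlam, neg_mul, Real.exp_neg, mul_right_comm, ← div_eq_mul_inv,
      div_le_one (Real.exp_pos _)]
    linarith [Real.add_one_le_exp (lam * v), mul_comm lam v]
  have hexp₁ : Real.exp (-lam * v) ≤ 1 := Real.exp_le_one_iff.2 (by nlinarith)
  calc v * expKernel γ lam v = v * v ^ (-γ) * Real.exp (-lam * v) := by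
        rw [expKernel, mul_assoc]
    _ ≤ (1 + v) * Real.exp (-lam * v) := by gcongr
    _ ≤ 1 + 1 / lam := by linarith

end expKernel

theorem integral_expKernel_comp_sub_mul_le {β γ lam c δ : ℝ} (hβ : 0 ≤ β) (hβ' : β < 1)
    (hγ : 0 ≤ γ) (hγ' : γ < 1) (hlam : 0 < lam) (hc : c ≤ 1) (hδ : 0 < δ) :
    ∫ u in (0 : ℝ)..δ, expKernel γ lam (δ - u) * (1 + u ^ (-β)) ^ c
      ≤ (1 + (δ / 2) ^ (-β)) * (∫ v in Ioi 0, expKernel γ lam v)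
        + expKernel γ lam (δ / 2) * (δ + δ * δ ^ (-β) / (1 - β)) := by
  have hw : AntitoneOn (fun u : ℝ => 1 + u ^ (-β)) (Ioi 0) := fun a ha b _ hab =>
    add_le_add_right (Real.rpow_le_rpow_of_nonpos ha hab (neg_nonpos.2 hβ)) 1
  have hw₀ : ∀ u ∈ Ioi (0 : ℝ), 0 ≤ 1 + u ^ (-β) := fun u hu =>
    add_nonneg zero_le_one (Real.rpow_nonneg (le_of_lt hu) _)
  have hconv := integral_le_of_le_comp_sub_mul
    (f := fun u => expKernel γ lam (δ - u) * (1 + u ^ (-β)) ^ c) hδ.le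
    (antitoneOn_expKernel hγ hlam.le) hw (fun v hv => expKernel_nonneg hv.le) hw₀
    (intervalIntegrable_expKernel hγ' hlam hδ.le)
    (intervalIntegrable_const.add (intervalIntegrable_rpow' (by linarith)))
    (fun u hu => mul_nonneg (expKernel_nonneg (sub_pos.2 hu.2).le)
      (Real.rpow_nonneg (hw₀ u hu.1) _))
    (fun u hu => mul_le_mul_of_nonneg_left
      (Real.rpow_le_self_of_one_le (le_add_of_nonneg_right (Real.rpow_nonneg hu.1.le _)) hc)
      (expKernel_nonneg (sub_pos.2 hu.2).le))
  rw [integral_one_add_rpow_neg hβ' hδ] at hconv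
  refine hconv.trans ?_
  gcongr
  exact integral_expKernel_le hγ' hlam hδ.le

theorem convolution_bound_general (β γ lam c t₀ : ℝ)
    (hβ : 0 < β) (hβ' : β < 1) (hγ : 0 < γ) (hγ' : γ < 1)
    (hlam : 0 < lam) (hc' : c < 1) :
    ∃ L > 0, ∀ t > t₀,
      ∫ s in t₀..t,
          (t - s) ^ (-γ) * Real.exp (-lam * (t - s)) * (1 + (s - t₀) ^ (-β)) ^ c
        ≤ L * (1 + (t - t₀) ^ (-β)) := by
  set C := ∫ v in Ioi 0, expKernel γ lam v
  set M := 1 + 1 / lam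
  have hC : 0 ≤ C := setIntegral_nonneg measurableSet_Ioi fun v hv => expKernel_nonneg hv.le
  have hβ₁ : 0 < 1 - β := sub_pos.2 hβ'
  have hM : M ≤ M / (1 - β) := le_div_self (by positivity) hβ₁ (by linarith)
  refine ⟨2 * C + 2 * M / (1 - β), by positivity, fun t ht => ?_⟩
  set δ := t - t₀
  have hδ : 0 < δ := sub_pos.2 ht
  set D := δ ^ (-β)
  have hD : 0 ≤ D := Real.rpow_nonneg hδ.le _
  have hhalf : (δ / 2) ^ (-β) ≤ 2 * D := half_rpow_neg_le hδ.le hβ'.le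
  have hvk := mul_expKernel_le hγ.le hγ'.le hlam (half_pos hδ)
  refine (integral_comp_sub_mul_comp_sub (expKernel γ lam) (fun u => (1 + u ^ (-β)) ^ c) t₀ t
    ).trans_le ((integral_expKernel_comp_sub_mul_le hβ.le hβ' hγ.le hγ' hlam hc'.le hδ).trans ?_)
  calc (1 + (δ / 2) ^ (-β)) * C + expKernel γ lam (δ / 2) * (δ + δ * D / (1 - β))
      = (1 + (δ / 2) ^ (-β)) * C + 2 * (δ / 2 * expKernel γ lam (δ / 2)) * (1 + D / (1 - β)) := by
        ring
    _ ≤ 2 * (1 + D) * C + 2 * M * (1 + D / (1 - β)) := by gcongr; linarith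
    _ = 2 * (1 + D) * C + 2 * M + 2 * M * D / (1 - β) := by ring
    _ ≤ 2 * (1 + D) * C + 2 * (M / (1 - β)) + 2 * M * D / (1 - β) := by linarith
    _ = (2 * C + 2 * M / (1 - β)) * (1 + D) := by ring

theorem convolution_bound (β γ lam c t₀ : ℝ)
    (hβ : 0 < β) (hβ' : β < 1) (hγ : 0 < γ) (hγ' : γ < 1)
    (hlam : 0 < lam) (hc : 0 < c) (hc' : c < 1) :
    ∃ L > 0, ∀ t > t₀,
      ∫ s in t₀..t,
          (t - s) ^ (-γ) * Real.exp (-lam * (t - s)) * (1 + (s - t₀) ^ (-β)) ^ c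
        ≤ L * (1 + (t - t₀) ^ (-β)) :=
  convolution_bound_general β γ lam c t₀ hβ hβ' hγ hγ' hlam hc'
end
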